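/- For every n-ary rudimentary set function F there exists a formula φ of RST with Fv(φ) = {y, x₁,…,xₙ}, φ ≻_RST {y}, and F(x₁,…,xₙ) = {y | φ} (interpreted in the cumulative universe V). -/

import Mathlib

mutual
/-- Terms of the language of RST: variables and class terms `{x | φ}`. -/
inductive RTerm : Type
  | var : ℕ → RTerm
  | cls : ℕ → RFormula → RTerm

/-- Formulas of the language of RST. -/
inductive RFormula : Type
  | mem : RTerm → RTerm → RFormula
  | eq  : RTerm → RTerm → RFormula
  | not : RFormula → RFormula
  | and : RFormula → RFormula → RFormula
  | or  : RFormula → RFormula → RFormula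
  | ex  : ℕ → RFormula → RFormula
end

mutual
/-- Free variables of a term. -/
def RTerm.fv : RTerm → Finset ℕ
  | .var n => {n}
  | .cls x φ => φ.fv.erase x

/-- Free variables of a formula. -/
def RFormula.fv : RFormula → Finset ℕ
  | .mem t s => t.fv ∪ s.fv
  | .eq t s => t.fv ∪ s.fv
  | .not φ => φ.fv
  | .and φ ψ => φ.fv ∪ ψ.fv
  | .or φ ψ => φ.fv ∪ ψ.fv
  | .ex x φ => φ.fv.erase x
end

/-- The safety relation `≻_RST`. -/
inductive Safe : RFormula → Finset ℕ → Prop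
  | atom_mem (t s : RTerm) : Safe (.mem t s) ∅
  | atom_eq (t s : RTerm) : Safe (.eq t s) ∅
  | eq_left (x : ℕ) (t : RTerm) : x ∉ t.fv → Safe (.eq (.var x) t) {x}
  | eq_right (x : ℕ) (t : RTerm) : x ∉ t.fv → Safe (.eq t (.var x)) {x}
  | mem_left (x : ℕ) (t : RTerm) : x ∉ t.fv → Safe (.mem (.var x) t) {x}
  | mem_self (x : ℕ) : Safe (.mem (.var x) (.var x)) {x}
  | not (φ : RFormula) : Safe φ ∅ → Safe (.not φ) ∅
  | or (φ ψ : RFormula) (X : Finset ℕ) : Safe φ X → Safe ψ X → Safe (.or φ ψ) X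
  | and (φ ψ : RFormula) (X Y : Finset ℕ) :
      Safe φ X → Safe ψ Y → Y ∩ φ.fv = ∅ → Safe (.and φ ψ) (X ∪ Y)
  | ex (y : ℕ) (φ : RFormula) (X : Finset ℕ) :
      y ∈ X → Safe φ X → Safe (.ex y φ) (X \ {y})

mutual
/-- Well-formed terms of RST: the body of a class term must be safe for its variable. -/
inductive WFTerm : RTerm → Prop
  | var (n : ℕ) : WFTerm (.var n)
  | cls (x : ℕ) (φ : RFormula) : WFForm φ → Safe φ {x} → WFTerm (.cls x φ)

/-- Well-formed formulas of RST. -/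
inductive WFForm : RFormula → Prop
  | mem {t s : RTerm} : WFTerm t → WFTerm s → WFForm (.mem t s)
  | eq {t s : RTerm} : WFTerm t → WFTerm s → WFForm (.eq t s)
  | not {φ : RFormula} : WFForm φ → WFForm (.not φ)
  | and {φ ψ : RFormula} : WFForm φ → WFForm ψ → WFForm (.and φ ψ)
  | or {φ ψ : RFormula} : WFForm φ → WFForm ψ → WFForm (.or φ ψ)
  | ex (x : ℕ) {φ : RFormula} : WFForm φ → WFForm (.ex x φ)
end
open scoped Classical

mutual
/-- Evaluation of a term in the cumulative universe `V` (modelled by `ZFSet`);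
a class term denotes the set which has exactly the members specified by its body,
if such a set exists, and `∅` otherwise. -/
noncomputable def RTerm.eval : RTerm → (ℕ → ZFSet.{0}) → ZFSet.{0}
  | .var n, v => v n
  | .cls x φ, v =>
      if h : ∃ s : ZFSet, ∀ z : ZFSet, z ∈ s ↔ (RFormula.sat' φ (Function.update v x z)).down.down then
        h.choose
      else ∅

/-- Satisfaction of a formula in the cumulative universe `V` (wrapped in `ULift (PLift _)`
so that it lives in the same universe as `ZFSet`). -/
noncomputable def RFormula.sat' : RFormula → (ℕ → ZFSet.{0}) → ULift.{1} (PLift Prop)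
  | .mem t s, v => ⟨⟨t.eval v ∈ s.eval v⟩⟩
  | .eq t s, v => ⟨⟨t.eval v = s.eval v⟩⟩
  | .not φ, v => ⟨⟨¬ (φ.sat' v).down.down⟩⟩
  | .and φ ψ, v => ⟨⟨(φ.sat' v).down.down ∧ (ψ.sat' v).down.down⟩⟩
  | .or φ ψ, v => ⟨⟨(φ.sat' v).down.down ∨ (ψ.sat' v).down.down⟩⟩
  | .ex x φ, v => ⟨⟨∃ z : ZFSet.{0}, (φ.sat' (Function.update v x z)).down.down⟩⟩
end

/-- Satisfaction of a formula of RST in the cumulative universe `V`. -/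
noncomputable def RFormula.sat (φ : RFormula) (v : ℕ → ZFSet.{0}) : Prop := (φ.sat' v).down.down

/-- The rudimentary set functions: the smallest class of functions `(Fin n → ZFSet) → ZFSet`
containing the projections, pairing and set difference, and closed under composition and
bounded union `F(x, ȳ) = ⋃_{w ∈ x} G(w, ȳ)`. -/
inductive Rud : {n : ℕ} → ((Fin n → ZFSet.{0}) → ZFSet.{0}) → Prop
  | proj {n : ℕ} (i : Fin n) : Rud fun x => x i
  | pair : Rud (n := 2) fun x => {x 0, x 1}
  | diff : Rud (n := 2) fun x => x 0 \ x 1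
  | comp {n m : ℕ} {G : (Fin m → ZFSet.{0}) → ZFSet.{0}} {H : Fin m → (Fin n → ZFSet.{0}) → ZFSet.{0}} :
      Rud G → (∀ i, Rud (H i)) → Rud fun x => G fun i => H i x
  | bunion {n : ℕ} {G : (Fin (n+1) → ZFSet.{0}) → ZFSet.{0}} {F : (Fin (n+1) → ZFSet.{0}) → ZFSet.{0}} :
      Rud G →
      (∀ (x : Fin (n+1) → ZFSet.{0}) (z : ZFSet.{0}),
        z ∈ F x ↔ ∃ w ∈ x 0, z ∈ G (Function.update x 0 w)) →
      Rud F

/-!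
By induction on rudimentary functions, every `n`-ary `F` is defined by a formula
`φ_F(x₀, …, x_{n-1}, y)` safe for `y`. Projections, pairing and difference are atomic formulas
or Boolean combinations of them. For a composition `G(H₀ x, …, H_{m-1} x)` the values `Hᵢ x` are
named by the class terms `{y | φ_{Hᵢ}}`, which are well formed exactly because `φ_{Hᵢ}` is safe
for `y`, and fed to `φ_G` through `∃ uᵢ (uᵢ = {y | φ_{Hᵢ}} ∧ …)`; this is safe because
`uᵢ = t` is safe for `uᵢ`. A bounded union `⋃_{w ∈ x₀} G(w, …)` is defined by
`∃ w (w ∈ x₀ ∧ φ_G(w, …, y))`. Subformulas are put side by side with injective renamings of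
variables, which preserve safety, well-formedness and meaning. Finally, conjuncts `xᵢ = xᵢ`
make the free variables exactly `{y, x₀, …, x_{n-1}}`.
-/

open Function

namespace RFormula

variable {t s : RTerm} {φ ψ : RFormula} {v : ℕ → ZFSet.{0}}

@[simp] theorem sat_mem : (mem t s).sat v ↔ t.eval v ∈ s.eval v := Iff.rfl
@[simp] theorem sat_eq : (eq t s).sat v ↔ t.eval v = s.eval v := Iff.rfl
@[simp] theorem sat_not : (not φ).sat v ↔ ¬φ.sat v := Iff.rfl
@[simp] theorem sat_and : (and φ ψ).sat v ↔ φ.sat v ∧ ψ.sat v := Iff.rfl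
@[simp] theorem sat_or : (or φ ψ).sat v ↔ φ.sat v ∨ ψ.sat v := Iff.rfl
@[simp] theorem sat_ex {x : ℕ} : (ex x φ).sat v ↔ ∃ z, φ.sat (update v x z) := Iff.rfl

end RFormula

namespace RTerm

@[simp] theorem eval_var (n : ℕ) (v : ℕ → ZFSet.{0}) : (var n).eval v = v n := by
  rw [eval]

theorem eval_cls (x : ℕ) (φ : RFormula) (v : ℕ → ZFSet.{0}) :
    (cls x φ).eval v =
      if h : ∃ s : ZFSet, ∀ z, z ∈ s ↔ φ.sat (update v x z) then h.choose else ∅ := by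
  rw [eval]; rfl

theorem eval_cls_congr {x y : ℕ} {φ ψ : RFormula} {v w : ℕ → ZFSet.{0}}
    (h : ∀ z, φ.sat (update v x z) ↔ ψ.sat (update w y z)) :
    (cls x φ).eval v = (cls y ψ).eval w := by
  simp only [eval_cls, h]

theorem eval_cls_of_iff {x : ℕ} {φ : RFormula} {v : ℕ → ZFSet.{0}} {s : ZFSet}
    (h : ∀ z, z ∈ s ↔ φ.sat (update v x z)) : (cls x φ).eval v = s := by
  have hs : ∃ s : ZFSet, ∀ z, z ∈ s ↔ φ.sat (update v x z) := ⟨s, h⟩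
  rw [eval_cls, dif_pos hs]
  exact ZFSet.ext fun z => (hs.choose_spec z).trans (h z).symm

end RTerm

theorem update_eq_update_of_forall_mem_erase {α : Type*} {v w : ℕ → α} {S : Finset ℕ} {x : ℕ}
    (h : ∀ m ∈ S.erase x, v m = w m) (z : α) : ∀ m ∈ S, update v x z m = update w x z m := by
  intro m hm
  by_cases hx : m = x
  · simp [hx]
  · simp [update_of_ne hx, h m (Finset.mem_erase.2 ⟨hx, hm⟩)]

mutual
theorem RTerm.eval_congr : ∀ (t : RTerm) {v w : ℕ → ZFSet.{0}},
    (∀ m ∈ t.fv, v m = w m) → t.eval v = t.eval w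
  | .var n, _, _, h => by simpa using h n (by simp [RTerm.fv])
  | .cls x φ, _, _, h =>
      RTerm.eval_cls_congr fun z => RFormula.sat_congr φ (update_eq_update_of_forall_mem_erase h z)

theorem RFormula.sat_congr : ∀ (φ : RFormula) {v w : ℕ → ZFSet.{0}},
    (∀ m ∈ φ.fv, v m = w m) → (φ.sat v ↔ φ.sat w)
  | .mem t s, _, _, h => by
      simp only [RFormula.sat_mem,
        RTerm.eval_congr t fun m hm => h m (by simp [RFormula.fv, hm]),
        RTerm.eval_congr s fun m hm => h m (by simp [RFormula.fv, hm])]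
  | .eq t s, _, _, h => by
      simp only [RFormula.sat_eq,
        RTerm.eval_congr t fun m hm => h m (by simp [RFormula.fv, hm]),
        RTerm.eval_congr s fun m hm => h m (by simp [RFormula.fv, hm])]
  | .not φ, _, _, h => not_congr (RFormula.sat_congr φ h)
  | .and φ ψ, _, _, h =>
      and_congr (RFormula.sat_congr φ fun m hm => h m (by simp [RFormula.fv, hm]))
        (RFormula.sat_congr ψ fun m hm => h m (by simp [RFormula.fv, hm]))
  | .or φ ψ, _, _, h =>
      or_congr (RFormula.sat_congr φ fun m hm => h m (by simp [RFormula.fv, hm]))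
        (RFormula.sat_congr ψ fun m hm => h m (by simp [RFormula.fv, hm]))
  | .ex x φ, _, _, h =>
      exists_congr fun z => RFormula.sat_congr φ (update_eq_update_of_forall_mem_erase h z)
end

mutual
def RTerm.rename (r : ℕ → ℕ) : RTerm → RTerm
  | .var n => .var (r n)
  | .cls x φ => .cls (r x) (φ.rename r)

def RFormula.rename (r : ℕ → ℕ) : RFormula → RFormula
  | .mem t s => .mem (t.rename r) (s.rename r)
  | .eq t s => .eq (t.rename r) (s.rename r)
  | .not φ => .not (φ.rename r)
  | .and φ ψ => .and (φ.rename r) (ψ.rename r)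
  | .or φ ψ => .or (φ.rename r) (ψ.rename r)
  | .ex x φ => .ex (r x) (φ.rename r)
end

section Rename

variable {r : ℕ → ℕ}

mutual
theorem RTerm.fv_rename (hr : Injective r) : ∀ t : RTerm, (t.rename r).fv = t.fv.image r
  | .var n => by simp [RTerm.rename, RTerm.fv]
  | .cls x φ => by
      simp [RTerm.rename, RTerm.fv, RFormula.fv_rename hr φ, Finset.image_erase hr]

theorem RFormula.fv_rename (hr : Injective r) : ∀ φ : RFormula, (φ.rename r).fv = φ.fv.image r
  | .mem t s | .eq t s => by
      simp [RFormula.rename, RFormula.fv, RTerm.fv_rename hr t, RTerm.fv_rename hr s,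
        Finset.image_union]
  | .not φ => by simp [RFormula.rename, RFormula.fv, RFormula.fv_rename hr φ]
  | .and φ ψ | .or φ ψ => by
      simp [RFormula.rename, RFormula.fv, RFormula.fv_rename hr φ, RFormula.fv_rename hr ψ,
        Finset.image_union]
  | .ex x φ => by
      simp [RFormula.rename, RFormula.fv, RFormula.fv_rename hr φ, Finset.image_erase hr]
end

theorem Safe.rename (hr : Injective r) {φ : RFormula} {X : Finset ℕ} (h : Safe φ X) :
    Safe (φ.rename r) (X.image r) := by
  have fv_ne {x : ℕ} {t : RTerm} (hx : x ∉ t.fv) : r x ∉ (t.rename r).fv := by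
    simpa [RTerm.fv_rename hr, hr.eq_iff] using hx
  induction h with
  | atom_mem => exact .atom_mem _ _
  | atom_eq => exact .atom_eq _ _
  | eq_left x t hx => exact .eq_left _ _ (fv_ne hx)
  | eq_right x t hx => exact .eq_right _ _ (fv_ne hx)
  | mem_left x t hx => exact .mem_left _ _ (fv_ne hx)
  | mem_self => exact .mem_self _
  | not _ _ ih =>
      rw [Finset.image_empty] at ih ⊢
      exact .not _ ih
  | or _ _ _ _ _ ih₁ ih₂ => exact .or _ _ _ ih₁ ih₂
  | and _ _ _ _ _ _ hd ih₁ ih₂ =>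
      rw [Finset.image_union]
      refine .and _ _ _ _ ih₁ ih₂ ?_
      rw [RFormula.fv_rename hr, ← Finset.image_inter _ _ hr, hd, Finset.image_empty]
  | ex _ _ _ hy _ ih =>
      simpa [Finset.image_sdiff _ _ hr] using .ex _ _ _ (Finset.mem_image_of_mem r hy) ih

mutual
theorem WFTerm.rename (hr : Injective r) : ∀ {t : RTerm}, WFTerm t → WFTerm (t.rename r)
  | .var n, _ => .var (r n)
  | .cls x φ, .cls _ _ hφ hs => .cls _ _ (WFForm.rename hr hφ) (by simpa using Safe.rename hr hs)

theorem WFForm.rename (hr : Injective r) : ∀ {φ : RFormula}, WFForm φ → WFForm (φ.rename r)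
  | .mem _ _, .mem ht hs => .mem (WFTerm.rename hr ht) (WFTerm.rename hr hs)
  | .eq _ _, .eq ht hs => .eq (WFTerm.rename hr ht) (WFTerm.rename hr hs)
  | .not _, .not hφ => .not (WFForm.rename hr hφ)
  | .and _ _, .and hφ hψ => .and (WFForm.rename hr hφ) (WFForm.rename hr hψ)
  | .or _ _, .or hφ hψ => .or (WFForm.rename hr hφ) (WFForm.rename hr hψ)
  | .ex x _, .ex _ hφ => .ex (r x) (WFForm.rename hr hφ)
end

mutual
theorem RTerm.eval_rename (hr : Injective r) :
    ∀ (t : RTerm) (v : ℕ → ZFSet.{0}), (t.rename r).eval v = t.eval (v ∘ r)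
  | .var n, v => by simp [RTerm.rename]
  | .cls x φ, v => RTerm.eval_cls_congr fun z => by
      rw [RFormula.sat_rename hr φ, update_comp_eq_of_injective v hr x z]

theorem RFormula.sat_rename (hr : Injective r) : ∀ (φ : RFormula) (v : ℕ → ZFSet.{0}),
    (φ.rename r).sat v ↔ φ.sat (v ∘ r)
  | .mem t s, v | .eq t s, v => by
      simp [RFormula.rename, RTerm.eval_rename hr t, RTerm.eval_rename hr s]
  | .not φ, v => not_congr (RFormula.sat_rename hr φ v)
  | .and φ ψ, v => and_congr (RFormula.sat_rename hr φ v) (RFormula.sat_rename hr ψ v)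
  | .or φ ψ, v => or_congr (RFormula.sat_rename hr φ v) (RFormula.sat_rename hr ψ v)
  | .ex x φ, v => by
      simp only [RFormula.rename, RFormula.sat_ex, RFormula.sat_rename hr φ,
        update_comp_eq_of_injective v hr x]
end

end Rename

theorem Safe.ex_and {u : ℕ} {α φ : RFormula} {X : Finset ℕ} (hα : Safe α {u}) (hφ : Safe φ X)
    (hX : Disjoint X α.fv) (hu : u ∉ X) : Safe (.ex u (.and α φ)) X := by
  have h := Safe.ex u _ _ (by simp) (hα.and _ _ _ _ hφ (Finset.disjoint_iff_inter_eq_empty.1 hX))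
  rwa [Finset.union_sdiff_cancel_left (Finset.disjoint_singleton_left.2 hu)] at h

theorem RFormula.sat_ex_eq_and {u : ℕ} {t : RTerm} {φ : RFormula} {v : ℕ → ZFSet.{0}}
    (hu : u ∉ t.fv) :
    (ex u (and (eq (.var u) t) φ)).sat v ↔ φ.sat (update v u (t.eval v)) := by
  have ht (z : ZFSet.{0}) : t.eval (update v u z) = t.eval v :=
    RTerm.eval_congr t fun m hm => update_of_ne (ne_of_mem_of_not_mem hm hu) _ _
  simp [ht]

/-- `letChain n t φ k` is `∃ u_{k-1} (u_{k-1} = t_{k-1} ∧ ⋯ ∃ u_0 (u_0 = t_0 ∧ φ))`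
with `u_j = n + 1 + j`. -/
def RFormula.letChain (n : ℕ) (t : ℕ → RTerm) (φ : RFormula) : ℕ → RFormula
  | 0 => φ
  | k + 1 => .ex (n + 1 + k) (.and (.eq (.var (n + 1 + k)) (t k)) (letChain n t φ k))

namespace RFormula

variable {n : ℕ} {t : ℕ → RTerm} {φ : RFormula}

theorem wf_letChain (ht : ∀ j, WFTerm (t j)) (hφ : WFForm φ) :
    ∀ k, WFForm (letChain n t φ k)
  | 0 => hφ
  | k + 1 => .ex _ (.and (.eq (.var _) (ht k)) (wf_letChain ht hφ k))

theorem safe_letChain (ht : ∀ j, (t j).fv ⊆ Finset.range n) (hφ : Safe φ {n}) :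
    ∀ k, Safe (letChain n t φ k) {n}
  | 0 => hφ
  | k + 1 => by
      have hu : n + 1 + k ∉ (t k).fv := fun h => absurd (Finset.mem_range.1 (ht k h)) (by omega)
      refine Safe.ex_and (.eq_left _ _ hu) (safe_letChain ht hφ k) ?_
        (by simp only [Finset.mem_singleton]; omega)
      simp only [Finset.disjoint_singleton_left, fv, RTerm.fv, Finset.mem_union,
        Finset.mem_singleton, not_or]
      exact ⟨by omega, fun h => by simpa using ht k h⟩

theorem fv_letChain_subset (ht : ∀ j, (t j).fv ⊆ Finset.range n) :
    ∀ k, (letChain n t φ k).fv ⊆ Finset.range n ∪ (φ.fv \ Finset.Ico (n + 1) (n + 1 + k))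
  | 0 => by simp [letChain]
  | k + 1 => by
      intro p hp
      simp only [letChain, fv, RTerm.fv, Finset.mem_erase, Finset.mem_union,
        Finset.mem_singleton] at hp
      obtain ⟨hne, (h | h) | h⟩ := hp
      · exact absurd h hne
      · exact Finset.mem_union_left _ (ht k h)
      · have := fv_letChain_subset ht k h
        simp only [Finset.mem_union, Finset.mem_range, Finset.mem_sdiff, Finset.mem_Ico] at this ⊢
        exact this.imp_right fun ⟨hφ, hp⟩ => ⟨hφ, by omega⟩

noncomputable def letVal (n : ℕ) (t : ℕ → RTerm) (k : ℕ) (v : ℕ → ZFSet.{0}) (p : ℕ) :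
    ZFSet.{0} :=
  if p ∈ Finset.Ico (n + 1) (n + 1 + k) then (t (p - (n + 1))).eval v else v p

theorem sat_letChain (ht : ∀ j, (t j).fv ⊆ Finset.range n) :
    ∀ k (v : ℕ → ZFSet.{0}), (letChain n t φ k).sat v ↔ φ.sat (letVal n t k v)
  | 0, v => by
      rw [letChain, show letVal n t 0 v = v from funext fun p => by simp [letVal]]
  | k + 1, v => by
      have hu (j : ℕ) : n + 1 + k ∉ (t j).fv := fun h =>
        absurd (Finset.mem_range.1 (ht j h)) (by omega)
      have hev (j : ℕ) (z : ZFSet.{0}) : (t j).eval (update v (n + 1 + k) z) = (t j).eval v :=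
        RTerm.eval_congr _ fun p hp => update_of_ne (ne_of_mem_of_not_mem hp (hu j)) _ _
      rw [letChain, sat_ex_eq_and (hu k), sat_letChain ht k]
      congr! 1
      funext p
      simp only [letVal, Finset.mem_Ico, hev]
      by_cases hp : p = n + 1 + k
      · subst hp; simp
      · simp only [update_of_ne hp]
        split_ifs <;> first | rfl | omega

end RFormula

/-- `φ` defines the `n`-ary function `F`: the variables `0, …, n - 1` stand for the arguments
and `n` for an element of the value. -/
structure RFormula.Defines {n : ℕ} (φ : RFormula) (F : (Fin n → ZFSet.{0}) → ZFSet.{0}) :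
    Prop where
  wf : WFForm φ
  fv_subset : φ.fv ⊆ Finset.range (n + 1)
  safe : Safe φ {n}
  sat_iff : ∀ (x : Fin n → ZFSet.{0}) (v : ℕ → ZFSet.{0}), (∀ i : Fin n, v i = x i) →
    (φ.sat v ↔ v n ∈ F x)

namespace RFormula.Defines

open RFormula

theorem proj {n : ℕ} (i : Fin n) :
    (mem (.var n) (.var i)).Defines fun x => x i where
  wf := .mem (.var _) (.var _)
  fv_subset p := by simp [fv, RTerm.fv]; omega
  safe := .mem_left _ _ (by simp [RTerm.fv]; omega)
  sat_iff x v hv := by simp [hv i]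

theorem pair :
    (or (eq (.var 2) (.var 0)) (eq (.var 2) (.var 1))).Defines (n := 2) fun x => {x 0, x 1} where
  wf := .or (.eq (.var _) (.var _)) (.eq (.var _) (.var _))
  fv_subset p := by simp [fv, RTerm.fv]; omega
  safe := .or _ _ _ (.eq_left _ _ (by simp [RTerm.fv])) (.eq_left _ _ (by simp [RTerm.fv]))
  sat_iff x v hv := by simp [← show v 0 = x 0 from hv 0, ← show v 1 = x 1 from hv 1]

theorem diff :
    (and (mem (.var 2) (.var 0)) (not (mem (.var 2) (.var 1)))).Defines (n := 2)
      fun x => x 0 \ x 1 where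
  wf := .and (.mem (.var _) (.var _)) (.not (.mem (.var _) (.var _)))
  fv_subset p := by simp [fv, RTerm.fv]; omega
  safe := by
    simpa using Safe.and _ _ _ _ (.mem_left 2 (.var 0) (by simp [RTerm.fv]))
      (.not _ (.atom_mem _ _)) (Finset.empty_inter _)
  sat_iff x v hv := by simp [← show v 0 = x 0 from hv 0, ← show v 1 = x 1 from hv 1]

end RFormula.Defines

/-- Moves the argument variables `i < m` of an `m`-ary defining formula to `n + 1 + i` and its
value variable `m` to `n`. -/
def compRename (n m k : ℕ) : ℕ := if k = m then n else n + 1 + k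

theorem compRename_injective (n m : ℕ) : Injective (compRename n m) := by
  intro a b h
  simp only [compRename] at h
  split_ifs at h <;> omega

/-- `G(H₀ x, …, H_{m-1} x) = {y | ∃ u_{m-1} … ∃ u_0 (⋀ᵢ uᵢ = {y | φ_{Hᵢ}} ∧ φ_G(u, y))}`;
the placeholder `n ∈ n` for indices `≥ m` is never used. -/
def compFormula (n m : ℕ) (φG : RFormula) (φH : Fin m → RFormula) : RFormula :=
  φG.rename (compRename n m) |>.letChain n
    (fun j => .cls n (if h : j < m then φH ⟨j, h⟩ else .mem (.var n) (.var n))) m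

theorem RFormula.Defines.comp {n m : ℕ} {G : (Fin m → ZFSet.{0}) → ZFSet.{0}}
    {H : Fin m → (Fin n → ZFSet.{0}) → ZFSet.{0}} {φG : RFormula} {φH : Fin m → RFormula}
    (hG : φG.Defines G) (hH : ∀ i, (φH i).Defines (H i)) :
    (compFormula n m φG φH).Defines fun x => G fun i => H i x := by
  unfold compFormula
  set ψ : ℕ → RFormula := fun j => if h : j < m then φH ⟨j, h⟩ else .mem (.var n) (.var n)
  have hψ (j : ℕ) : WFForm (ψ j) ∧ (ψ j).fv ⊆ Finset.range (n + 1) ∧ Safe (ψ j) {n} := by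
    by_cases h : j < m
    · simp only [ψ, dif_pos h]
      exact ⟨(hH _).wf, (hH _).fv_subset, (hH _).safe⟩
    · simp only [ψ, dif_neg h]
      exact ⟨.mem (.var n) (.var n), by simp [fv, RTerm.fv], .mem_self n⟩
  have ht (j : ℕ) : (RTerm.cls n (ψ j)).fv ⊆ Finset.range n := by
    intro p hp
    rw [RTerm.fv, Finset.mem_erase] at hp
    have := (hψ j).2.1 hp.2
    rw [Finset.mem_range] at this ⊢
    omega
  have hr := compRename_injective n m
  have hbase : Safe (φG.rename (compRename n m)) {n} := by
    simpa [compRename] using hG.safe.rename hr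
  refine ⟨wf_letChain (fun j => .cls n _ (hψ j).1 (hψ j).2.2) (hG.wf.rename hr) m, ?_,
    safe_letChain ht hbase m, fun x v hv => ?_⟩
  · intro p hp
    have := fv_letChain_subset ht m hp
    simp only [Finset.mem_union, Finset.mem_sdiff, fv_rename hr, Finset.mem_image,
      Finset.mem_Ico, Finset.mem_range] at this ⊢
    obtain h | ⟨⟨q, hq, rfl⟩, hnot⟩ := this
    · omega
    · have := Finset.mem_range.1 (hG.fv_subset hq)
      unfold compRename at hnot ⊢
      split_ifs at hnot ⊢ <;> omega
  · rw [sat_letChain ht, sat_rename hr]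
    set w := letVal n (fun j => .cls n (ψ j)) m v ∘ compRename n m
    have hval (i : Fin m) : w i = H i x := by
      have hi : compRename n m i = n + 1 + i := if_neg i.isLt.ne
      simp only [w, comp_apply, hi]
      rw [letVal, if_pos (by simp), Nat.add_sub_cancel_left]
      refine RTerm.eval_cls_of_iff fun z => ?_
      simp only [ψ, dif_pos i.isLt]
      rw [(hH i).sat_iff x _ fun j => by rw [update_of_ne (by omega), hv], update_self]
    have hy : w m = v n := by simp [w, compRename, letVal]
    rw [hG.sat_iff _ _ hval, hy]

/-- `⋃_{w ∈ x₀} G(w, x₁, …, xₙ) = {y | ∃ w (w ∈ x₀ ∧ φ_G(w, x₁, …, xₙ, y))}`, with the bound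
variable `w` placed at `n + 2`. -/
def bunionFormula (n : ℕ) (φG : RFormula) : RFormula :=
  .ex (n + 2) (.and (.mem (.var (n + 2)) (.var 0)) (φG.rename (Equiv.swap 0 (n + 2))))

theorem RFormula.Defines.bunion {n : ℕ} {G F : (Fin (n + 1) → ZFSet.{0}) → ZFSet.{0}}
    {φG : RFormula} (hG : φG.Defines G)
    (hF : ∀ x z, z ∈ F x ↔ ∃ w ∈ x 0, z ∈ G (update x 0 w)) :
    (bunionFormula n φG).Defines F := by
  rw [bunionFormula]
  set σ := Equiv.swap 0 (n + 2)
  have hσ (k : ℕ) (h0 : k ≠ 0) (h2 : k ≠ n + 2) : σ k = k := Equiv.swap_apply_of_ne_of_ne h0 h2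
  refine ⟨.ex _ (.and (.mem (.var _) (.var 0)) (hG.wf.rename σ.injective)), ?_, ?_,
    fun x v hv => ?_⟩
  · intro p hp
    simp only [fv, RTerm.fv, fv_rename σ.injective, Finset.mem_erase,
      Finset.mem_union, Finset.mem_singleton, Finset.mem_image, Finset.mem_range] at hp ⊢
    obtain ⟨hne, (h | h) | ⟨q, hq, rfl⟩⟩ := hp
    · omega
    · omega
    · have := Finset.mem_range.1 (hG.fv_subset hq)
      by_cases hq0 : q = 0
      · simp [σ, hq0] at hne
      · rw [hσ q hq0 (by omega)]; omega
  · refine Safe.ex_and (.mem_left _ (.var 0) (by simp [RTerm.fv])) ?_ (by simp [fv, RTerm.fv])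
      (by simp)
    simpa [hσ (n + 1)] using hG.safe.rename σ.injective
  · have hval (w : ZFSet.{0}) (i : Fin (n + 1)) :
        (update v (n + 2) w ∘ σ) i = update x 0 w i := by
      by_cases hi : i = 0
      · simp [σ, hi]
      · have hi' : (i : ℕ) ≠ 0 := Fin.val_ne_zero_iff.2 hi
        rw [comp_apply, hσ i hi' (by omega), update_of_ne (by omega), update_of_ne hi, hv]
    have hy (w : ZFSet.{0}) : (update v (n + 2) w ∘ σ) (n + 1) = v (n + 1) := by
      rw [comp_apply, hσ (n + 1) (by omega) (by omega), update_of_ne (by omega)]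
    simp only [sat_ex, sat_and, sat_mem, RTerm.eval_var, update_self,
      update_of_ne (show 0 ≠ n + 2 by omega), sat_rename σ.injective]
    simp only [hG.sat_iff _ _ (hval _), hy, hF, ← show v 0 = x 0 from hv 0]

theorem Rud.exists_defines {n : ℕ} {F : (Fin n → ZFSet.{0}) → ZFSet.{0}} (hF : Rud F) :
    ∃ φ : RFormula, φ.Defines F := by
  induction hF with
  | proj i => exact ⟨_, .proj i⟩
  | pair => exact ⟨_, .pair⟩
  | diff => exact ⟨_, .diff⟩
  | comp _ _ ihG ihH =>
      obtain ⟨φG, hG⟩ := ihG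
      choose φH hH using ihH
      exact ⟨_, hG.comp hH⟩
  | bunion _ hF ihG =>
      obtain ⟨φG, hG⟩ := ihG
      exact ⟨_, hG.bunion hF⟩

namespace RFormula

def eqSelfUpTo : ℕ → RFormula
  | 0 => .eq (.var 0) (.var 0)
  | k + 1 => .and (eqSelfUpTo k) (.eq (.var (k + 1)) (.var (k + 1)))

theorem fv_eqSelfUpTo : ∀ k, (eqSelfUpTo k).fv = Finset.range (k + 1)
  | 0 => by simp [eqSelfUpTo, fv, RTerm.fv]
  | k + 1 => by
      rw [eqSelfUpTo, fv, fv_eqSelfUpTo k, Finset.range_add_one (n := k + 1)]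
      simp [fv, RTerm.fv]

theorem wf_eqSelfUpTo : ∀ k, WFForm (eqSelfUpTo k)
  | 0 => .eq (.var 0) (.var 0)
  | k + 1 => .and (wf_eqSelfUpTo k) (.eq (.var _) (.var _))

theorem safe_eqSelfUpTo : ∀ k, Safe (eqSelfUpTo k) ∅
  | 0 => .atom_eq _ _
  | k + 1 => by
      simpa [eqSelfUpTo] using Safe.and _ _ _ _ (safe_eqSelfUpTo k) (.atom_eq _ _) (by simp)

theorem sat_eqSelfUpTo : ∀ k (v : ℕ → ZFSet.{0}), (eqSelfUpTo k).sat v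
  | 0, _ => rfl
  | k + 1, v => ⟨sat_eqSelfUpTo k v, rfl⟩

end RFormula

/-- For every `n`-ary rudimentary function `F` there is a formula `φ` of RST with
`Fv(φ) = {y, x₁, …, xₙ}` (the variables `n, 0, …, n-1`), `φ ≻_RST {y}`, and
`F(x₁,…,xₙ) = {y ∣ φ}` in the cumulative universe. -/
theorem rud_to_formula (n : ℕ) (F : (Fin n → ZFSet.{0}) → ZFSet.{0}) (hF : Rud F) :
    ∃ φ : RFormula, WFForm φ ∧ φ.fv = Finset.range (n + 1) ∧ Safe φ {n} ∧
      ∀ (x : Fin n → ZFSet.{0}) (z : ZFSet.{0}),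
        z ∈ F x ↔ φ.sat fun m => if h : m < n then x ⟨m, h⟩ else z := by
  obtain ⟨φ, hφ⟩ := hF.exists_defines
  refine ⟨φ.and (.eqSelfUpTo n), .and hφ.wf (RFormula.wf_eqSelfUpTo n), ?_, ?_, fun x z => ?_⟩
  · rw [RFormula.fv, RFormula.fv_eqSelfUpTo, Finset.union_eq_right.2 hφ.fv_subset]
  · simpa using Safe.and _ _ _ _ hφ.safe (RFormula.safe_eqSelfUpTo n) (Finset.empty_inter _)
  · rw [RFormula.sat_and, hφ.sat_iff x _ fun i => dif_pos i.isLt, dif_neg n.lt_irrefl,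
      and_iff_left (RFormula.sat_eqSelfUpTo n _)]
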